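/- Assume p ≥ 3. Let e ≥ 1, let V be a totally ramified extension of W(k) of degree at most e, and let π be any uniformizer of V. Then for every f = Σₙ aₙTⁿ ∈ R̃e(k), each term aₙπⁿ (computed in the fraction field of V) lies in V, the partial sums Σ_{n<N} aₙπⁿ converge in V for the maximal-ideal-adic topology, and the resulting map f ↦ Σₙ aₙπⁿ is a surjective W(k)-algebra homomorphism R̃e(k) → V sending T to π. -/

import Mathlib

/-!
Piano rings (A. Vasiu, "Shimura varieties and the Mumford–Tate conjecture", §2.1).

`W(k)` is the ring of `p`-typical Witt vectors of a perfect field `k` of characteristic `p`,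
`B(k) = W(k)[1/p]` its fraction field.  For `e ≥ 1`, the piano ring `R̃e(k)` of resonance `e`
consists of the power series `Σ aₙ Tⁿ ∈ B(k)[[T]]` with `aₙ ⬝ (⌊n/e⌋)! ∈ W(k)` for all `n`,
and the piano ring `Re(k)` of convergent resonance `e` consists of those for which moreover
`bₙ := aₙ ⬝ (⌊n/e⌋)!` converges `p`-adically to `0`.
-/

noncomputable section

open PowerSeries

variable (p : ℕ) [Fact p.Prime] (k : Type*) [Field k] [CharP k p] [PerfectRing k p]

/-- `x` lies in the canonical image of `W(k)` inside `B(k)`. -/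
def InW (x : FractionRing (WittVector p k)) : Prop :=
  ∃ w : WittVector p k,
    algebraMap (WittVector p k) (FractionRing (WittVector p k)) w = x

/-- The piano ring `R̃e(k)` of resonance `e`: power series `Σ aₙ Tⁿ` over `B(k)` with
`aₙ ⬝ (⌊n/e⌋)! ∈ W(k)` for all `n`. -/
def pianoTilde (e : ℕ) : Set (PowerSeries (FractionRing (WittVector p k))) :=
  {f | ∀ n : ℕ,
    InW p k (PowerSeries.coeff n f * (Nat.factorial (n / e) : FractionRing (WittVector p k)))}

/-- The piano ring `Re(k)` of convergent resonance `e`: power series `Σ aₙ Tⁿ` over `B(k)`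
with `bₙ := aₙ ⬝ (⌊n/e⌋)! ∈ W(k)` for all `n` and `bₙ → 0` `p`-adically
(for every `m` eventually `bₙ ∈ pᵐ W(k)`). -/
def pianoR (e : ℕ) : Set (PowerSeries (FractionRing (WittVector p k))) :=
  {f | (∀ n : ℕ,
      InW p k (PowerSeries.coeff n f * (Nat.factorial (n / e) : FractionRing (WittVector p k)))) ∧
    ∀ m : ℕ, ∃ N : ℕ, ∀ n ≥ N, ∃ w : WittVector p k,
      algebraMap (WittVector p k) (FractionRing (WittVector p k)) ((p : WittVector p k) ^ m * w)
        = PowerSeries.coeff n f * (Nat.factorial (n / e) : FractionRing (WittVector p k))}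

/-- The canonical embedding `B(k) ↪ Frac V` induced by an injective map `W(k) → V`. -/
def embB (V : Type*) [CommRing V] [IsDomain V] [Algebra (WittVector p k) V]
    (hinj : Function.Injective (algebraMap (WittVector p k) V)) :
    FractionRing (WittVector p k) →+* FractionRing V :=
  IsFractionRing.map hinj

/-!
Write `p = u * π ^ c` in `V`. The powers `1, π, …, π ^ (c - 1)` have pairwise distinct valuations
modulo `c`, so they are `W(k)`-linearly independent and `c ≤ rank ≤ e`. For `f ∈ R̃e(k)` we have
`aₙ = bₙ / ⌊n/e⌋!` with `bₙ ∈ W(k)`, and Legendre's formula with `p ≥ 3` gives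
`2 v_p(⌊n/e⌋!) ≤ ⌊n/e⌋`; hence `v_π(aₙ πⁿ) ≥ n - c ⌊n/e⌋ / 2 ≥ n - n/2`, so the terms lie in `V`
and tend to `0`. Being finite free over the `p`-adically complete ring `W(k)`, `V` is `π`-adically
complete, so `Φ f = Σ aₙ πⁿ` converges; additivity of sums and the Cauchy product formula make `Φ`
a ring map, and since `V` and `W(k)` have the same residue field every `v ∈ V` has a `π`-adic
expansion `Σ wₙ πⁿ` with digits `wₙ ∈ W(k)`.
-/

open IsLocalRing Filter Topology Finset
open scoped Nat

theorem two_mul_le_of_pow_dvd_factorial {p : ℕ} [Fact p.Prime] (hp : 3 ≤ p) {s m : ℕ}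
    (h : p ^ s ∣ m !) : 2 * s ≤ m := by
  have hs : s ≤ padicValNat p m ! := (padicValNat_dvd_iff_le (Nat.factorial_ne_zero m)).mp h
  have hlegendre : (p - 1) * padicValNat p m ! ≤ m :=
    sub_one_mul_padicValNat_factorial (p := p) m ▸ Nat.sub_le _ _
  calc 2 * s ≤ (p - 1) * padicValNat p m ! := Nat.mul_le_mul (by omega) hs
    _ ≤ m := hlegendre

theorem IsPrecomplete.of_pow {R M : Type*} [CommRing R] [AddCommGroup M] [Module R M]
    {I : Ideal R} {c : ℕ} (hc : 0 < c) [IsPrecomplete (I ^ c) M] : IsPrecomplete I M := by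
  refine ⟨fun f hf => ?_⟩
  obtain ⟨L, hL⟩ := IsPrecomplete.prec (I := I ^ c) ‹_› (f := fun n => f (c * n))
    fun hmn => by rw [← pow_mul]; exact hf (Nat.mul_le_mul_left c hmn)
  refine ⟨L, fun n => (hf (Nat.le_mul_of_pos_left n hc)).trans (SModEq.mono ?_ (hL n))⟩
  rw [← pow_mul]
  exact Submodule.smul_mono_left (Ideal.pow_le_pow_right (Nat.le_mul_of_pos_left n hc))

theorem IsPrecomplete.of_basis {ι R M : Type*} [Finite ι] [CommRing R] [AddCommGroup M]
    [Module R M] {I : Ideal R} [IsPrecomplete I R] (b : Module.Basis ι R M) :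
    IsPrecomplete I M := by
  have := Fintype.ofFinite ι
  refine ⟨fun f hf => ?_⟩
  have hcoord (i : ι) {m n : ℕ} (hmn : m ≤ n) :
      b.coord i (f m) ≡ b.coord i (f n) [SMOD (I ^ m • ⊤ : Submodule R R)] :=
    SModEq.mono (Submodule.map_le_iff_le_comap.mpr (Submodule.smul_top_le_comap_smul_top _ _))
      ((hf hmn).map _)
  choose L hL using fun i => IsPrecomplete.prec ‹IsPrecomplete I R› (hcoord i)
  refine ⟨∑ i, L i • b i, fun n => ?_⟩
  conv_lhs => rw [← b.sum_repr (f n)]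
  refine SModEq.sum fun i _ => SModEq.sub_mem.mpr ?_
  rw [← sub_smul]
  exact Submodule.smul_mem_smul (by simpa [SModEq.sub_mem] using hL i n) Submodule.mem_top

namespace IsDiscreteValuationRing

variable {R : Type*} [CommRing R] [IsDomain R] [IsDiscreteValuationRing R]

theorem sum_ne_zero_of_injOn_addVal {ι : Type*} {s : Finset ι} {f : ι → R} (hs : s.Nonempty)
    (hf : ∀ i ∈ s, f i ≠ 0) (hinj : Set.InjOn (fun i => addVal R (f i)) s) :
    ∑ i ∈ s, f i ≠ 0 := by
  classical
  obtain ⟨j, hj, hmin⟩ := s.exists_min_image (fun i => addVal R (f i)) hs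
  have hfj : addVal R (f j) ≠ ⊤ := by rw [Ne, addVal_eq_top_iff]; exact hf j hj
  have hrest : addVal R (f j) < addVal R (∑ i ∈ s.erase j, f i) :=
    (addVal R).map_lt_sum hfj fun i hi => lt_of_le_of_ne (hmin i (mem_of_mem_erase hi))
      fun h => ne_of_mem_erase hi (hinj (mem_of_mem_erase hi) hj h.symm)
  rw [← add_sum_erase s f hj, Ne, ← addVal_eq_top_iff,
    (addVal R).map_add_eq_of_lt_left hrest]
  exact hfj

variable {W : Type*} [CommRing W] [IsDomain W] [IsDiscreteValuationRing W] [Algebra W R]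

theorem addVal_smul_pow_of_algebraMap_eq {ϖ : W} (hϖ : Irreducible ϖ) {π : R}
    (hπ : Irreducible π) {c : ℕ} {u : Rˣ} (hu : algebraMap W R ϖ = u * π ^ c) {w : W}
    (hw : w ≠ 0) (i : ℕ) : ∃ m : ℕ, addVal R (w • π ^ i) = (c * m + i : ℕ) := by
  obtain ⟨m, v, rfl⟩ := eq_unit_mul_pow_irreducible hw hϖ
  refine ⟨m, addVal_def _ (Units.map (algebraMap W R) v * u ^ m) hπ _ ?_⟩
  rw [Algebra.smul_def, map_mul, map_pow, hu, Units.val_mul, Units.coe_map,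
    Units.val_pow_eq_pow_val, MonoidHom.coe_coe]
  ring

theorem linearIndependent_pow_of_algebraMap_eq {ϖ : W} (hϖ : Irreducible ϖ) {π : R}
    (hπ : Irreducible π) {c : ℕ} {u : Rˣ} (hu : algebraMap W R ϖ = u * π ^ c) :
    LinearIndependent W fun i : Fin c => π ^ (i : ℕ) := by
  classical
  rw [Fintype.linearIndependent_iff]
  intro g hsum
  by_contra! ⟨i₀, hi₀⟩
  choose m hm using fun i : Fin c => fun hi : g i ≠ 0 =>
    addVal_smul_pow_of_algebraMap_eq hϖ hπ hu hi i
  have hsum' : ∑ i ∈ univ with g i ≠ 0, g i • π ^ (i : ℕ) = 0 :=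
    (sum_filter_of_ne (p := fun i => g i ≠ 0) fun i _ h hg => h (by rw [hg, zero_smul])).trans hsum
  refine sum_ne_zero_of_injOn_addVal ⟨i₀, by simp [hi₀]⟩ (fun i hi => ?_)
    (fun i hi j hj hij => ?_) hsum'
  · rw [Ne, ← addVal_eq_top_iff, hm i (mem_filter.mp hi).2]
    exact ENat.natCast_ne_top _
  · have := congrArg (· % c) (Nat.cast_injective (R := ℕ∞)
      ((hm i (mem_filter.mp hi).2).symm.trans (hij.trans (hm j (mem_filter.mp hj).2))))
    simp only [Nat.mul_add_mod, Nat.mod_eq_of_lt i.2, Nat.mod_eq_of_lt j.2] at this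
    exact Fin.ext this

theorem exists_algebraMap_eq_unit_mul_pow [Module.Finite W R] [IsLocalHom (algebraMap W R)]
    (hinj : Function.Injective (algebraMap W R)) {ϖ : W} (hϖ : Irreducible ϖ) {π : R}
    (hπ : Irreducible π) :
    ∃ (c : ℕ) (u : Rˣ), 0 < c ∧ c ≤ Module.finrank W R ∧ algebraMap W R ϖ = u * π ^ c := by
  obtain ⟨c, u, hu⟩ := eq_unit_mul_pow_irreducible
    ((map_ne_zero_iff _ hinj).mpr hϖ.ne_zero) hπ
  refine ⟨c, u, Nat.pos_of_ne_zero fun hc => hϖ.not_isUnit ?_, ?_, hu⟩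
  · rw [hc, pow_zero, mul_one] at hu
    exact (isUnit_map_iff (algebraMap W R) ϖ).mp (hu ▸ u.isUnit)
  · simpa using (linearIndependent_pow_of_algebraMap_eq hϖ hπ hu).fintype_card_le_finrank

end IsDiscreteValuationRing

theorem IsLocalRing.isAdicComplete_of_map_eq_pow {W R : Type*} [CommRing W] [CommRing R]
    [IsLocalRing R] [IsNoetherianRing R] [Algebra W R] [Module.Free W R] [Module.Finite W R]
    {I : Ideal W} [IsPrecomplete I W] {c : ℕ} (hc : 0 < c)
    (hI : I.map (algebraMap W R) = maximalIdeal R ^ c) : IsAdicComplete (maximalIdeal R) R where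
  toIsPrecomplete :=
    have := (IsPrecomplete.map_algebraMap_iff (S := R)).mpr
      (IsPrecomplete.of_basis (I := I) (Module.Free.chooseBasis W R))
    have : IsPrecomplete (maximalIdeal R ^ c) R := hI ▸ this
    .of_pow hc

abbrev IsLocalRing.withMaximalIdeal (R : Type*) [CommRing R] [IsLocalRing R] : WithIdeal R :=
  ⟨maximalIdeal R⟩

attribute [local instance] IsLocalRing.withMaximalIdeal

section AdicTopology

variable {R : Type*} [CommRing R] [IsLocalRing R]

theorem IsLocalRing.tendsto_nhds_iff_sub_mem_pow {α : Type*} {l : Filter α} {s : α → R}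
    {x : R} : Tendsto s l (𝓝 x) ↔ ∀ m, ∀ᶠ a in l, s a - x ∈ maximalIdeal R ^ m := by
  rw [← tendsto_sub_nhds_zero_iff]
  exact (maximalIdeal R).hasBasis_nhds_zero_adic.tendsto_right_iff.trans (by simp)

theorem IsLocalRing.summable_of_mem_pow [CompleteSpace R] {x : ℕ → R} {d : ℕ → ℕ}
    (hd : Tendsto d atTop atTop) (hx : ∀ n, x n ∈ maximalIdeal R ^ d n) : Summable x := by
  refine NonarchimedeanAddGroup.summable_of_tendsto_cofinite_zero ?_
  rw [Nat.cofinite_eq_atTop, tendsto_nhds_iff_sub_mem_pow]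
  exact fun m => (hd.eventually_ge_atTop m).mono fun n hn => by
    simpa using Ideal.pow_le_pow_right hn (hx n)

end AdicTopology

theorem exists_digits_sub_sum_mem_pow {R α : Type*} [CommRing R] (π : R) (f : α → R)
    (hf : ∀ x, ∃ a, x - f a ∈ Ideal.span {π}) (x : R) :
    ∃ a : ℕ → α, ∀ N, x - ∑ n ∈ range N, f (a n) * π ^ n ∈ Ideal.span {π} ^ N := by
  choose d t ht using fun y => (hf y).imp fun _ => Ideal.mem_span_singleton'.mp
  let r : ℕ → R := fun n => Nat.rec x (fun _ y => t y) n
  have hr (N : ℕ) : x - ∑ n ∈ range N, f (d (r n)) * π ^ n = π ^ N * r N := by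
    induction N with
    | zero => simp [r]
    | succ N ih =>
      rw [sum_range_succ, ← sub_sub, ih, pow_succ]
      linear_combination (-π ^ N) * ht (r N)
  refine ⟨fun n => d (r n), fun N => ?_⟩
  rw [hr, Ideal.span_singleton_pow]
  exact Ideal.mul_mem_right _ _ (Ideal.mem_span_singleton_self _)

theorem WittVector.isUnit_natCast_of_not_dvd {p : ℕ} [Fact p.Prime] {k : Type*} [Field k]
    [CharP k p] {r : ℕ} (hr : ¬ p ∣ r) :
    IsUnit (r : WittVector p k) := by
  refine WittVector.isUnit_of_coeff_zero_ne_zero _ ?_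
  rw [← WittVector.constantCoeff_apply, map_natCast, Ne, CharP.cast_eq_zero_iff k p]
  exact hr

theorem algebraMap_factorial_mul_pow_dvd {p : ℕ} [Fact p.Prime] {k : Type*} [Field k]
    [CharP k p] {V : Type*} [CommRing V] [Algebra (WittVector p k) V] (hp3 : 3 ≤ p) {π : V}
    {c e : ℕ} {u : Vˣ} (hu : algebraMap (WittVector p k) V p = u * π ^ c) (hce : c ≤ e)
    (n : ℕ) :
    algebraMap (WittVector p k) V ((n / e)! : WittVector p k) * π ^ (n - n / 2) ∣ π ^ n := by
  obtain ⟨s, r, hr, hfac⟩ := Nat.exists_eq_pow_mul_and_not_dvd (Nat.factorial_ne_zero (n / e))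
    p (Fact.out : p.Prime).one_lt.ne'
  have hs : 2 * s ≤ n / e := two_mul_le_of_pow_dvd_factorial hp3 (hfac ▸ dvd_mul_right _ _)
  have hcs : c * s ≤ n / 2 := by
    rw [Nat.le_div_iff_mul_le two_pos]
    calc c * s * 2 = c * (2 * s) := by ring
      _ ≤ e * (n / e) := Nat.mul_le_mul hce hs
      _ ≤ n := Nat.mul_div_le n e
  have hA : algebraMap (WittVector p k) V ((n / e)! : WittVector p k)
      = (u ^ s * algebraMap (WittVector p k) V r) * π ^ (c * s) := by
    rw [hfac, Nat.cast_mul, Nat.cast_pow, map_mul, map_pow, hu]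
    ring
  rw [hA, mul_assoc, IsUnit.mul_left_dvd
    ((u.isUnit.pow s).mul ((WittVector.isUnit_natCast_of_not_dvd hr).map _)), ← pow_add]
  exact pow_dvd_pow π (by omega)

section Evaluation

variable {p : ℕ} [Fact p.Prime] {k : Type*} [Field k]
variable {V : Type*} [CommRing V] [IsDomain V] [Algebra (WittVector p k) V]
  (hinj : Function.Injective (algebraMap (WittVector p k) V)) (π : V)

theorem embB_algebraMap (w : WittVector p k) :
    embB p k V hinj (algebraMap (WittVector p k) (FractionRing (WittVector p k)) w) =
      algebraMap V (FractionRing V) (algebraMap (WittVector p k) V w) :=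
  IsLocalization.map_eq (nonZeroDivisors_le_comap_nonZeroDivisors_of_injective _ hinj) w

/-- The term `aₙ πⁿ` of `f = Σ aₙ Tⁿ`, read in `V`; an arbitrary element when `aₙ πⁿ ∉ V`. -/
def termAt (f : PowerSeries (FractionRing (WittVector p k))) (n : ℕ) : V :=
  Function.invFun (algebraMap V (FractionRing V))
    (embB p k V hinj (coeff n f) * algebraMap V (FractionRing V) π ^ n)

def HasIntegralTerms (f : PowerSeries (FractionRing (WittVector p k))) : Prop :=
  ∀ n, ∃ v : V, algebraMap V (FractionRing V) v =
    embB p k V hinj (coeff n f) * algebraMap V (FractionRing V) π ^ n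

variable {hinj π}
variable {f g : PowerSeries (FractionRing (WittVector p k))}

theorem termAt_eq {n : ℕ} {v : V} (h : algebraMap V (FractionRing V) v =
    embB p k V hinj (coeff n f) * algebraMap V (FractionRing V) π ^ n) :
    termAt hinj π f n = v :=
  IsFractionRing.injective V (FractionRing V) (by rw [termAt, Function.invFun_eq ⟨v, h⟩, h])

theorem algebraMap_termAt (hf : HasIntegralTerms hinj π f) (n : ℕ) :
    algebraMap V (FractionRing V) (termAt hinj π f n) =
      embB p k V hinj (coeff n f) * algebraMap V (FractionRing V) π ^ n :=
  Function.invFun_eq (hf n)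

theorem termAt_add (hf : HasIntegralTerms hinj π f) (hg : HasIntegralTerms hinj π g) (n : ℕ) :
    termAt hinj π (f + g) n = termAt hinj π f n + termAt hinj π g n :=
  termAt_eq (by rw [map_add, algebraMap_termAt hf, algebraMap_termAt hg, map_add,
    map_add, add_mul])

theorem termAt_mul (hf : HasIntegralTerms hinj π f) (hg : HasIntegralTerms hinj π g) (n : ℕ) :
    termAt hinj π (f * g) n =
      ∑ x ∈ antidiagonal n, termAt hinj π f x.1 * termAt hinj π g x.2 := by
  refine termAt_eq ?_
  rw [map_sum, coeff_mul, map_sum, sum_mul]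
  refine sum_congr rfl fun x hx => ?_
  rw [map_mul, algebraMap_termAt hf, algebraMap_termAt hg, map_mul,
    ← mem_antidiagonal.mp hx, pow_add]
  ring

theorem termAt_C (w : WittVector p k) (n : ℕ) :
    termAt hinj π (C (algebraMap (WittVector p k) (FractionRing (WittVector p k)) w)) n =
      if n = 0 then algebraMap (WittVector p k) V w else 0 := by
  refine termAt_eq ?_
  split_ifs with hn
  · simp [hn, embB_algebraMap]
  · simp [coeff_C, hn]

theorem termAt_X (n : ℕ) : termAt hinj π X n = if n = 1 then π else 0 := by
  refine termAt_eq ?_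
  split_ifs with hn
  · simp [hn]
  · simp [coeff_X, hn]

end Evaluation

section Summation

variable {p : ℕ} [Fact p.Prime] {k : Type*} [Field k]
variable {V : Type*} [CommRing V] [IsDomain V] [IsLocalRing V] [Algebra (WittVector p k) V]
  (hinj : Function.Injective (algebraMap (WittVector p k) V)) (π : V)

def evalAt (f : PowerSeries (FractionRing (WittVector p k))) : V :=
  ∑' n, termAt hinj π f n

variable {hinj π}
variable {f g : PowerSeries (FractionRing (WittVector p k))}

theorem evalAt_sub_mem_pow (hf : HasIntegralTerms hinj π f)
    (hsum : Summable (termAt hinj π f)) {s : ℕ → V}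
    (hs : ∀ N, algebraMap V (FractionRing V) (s N) = ∑ n ∈ range N,
      embB p k V hinj (coeff n f) * algebraMap V (FractionRing V) π ^ n) (m : ℕ) :
    ∃ N₀, ∀ N ≥ N₀, evalAt hinj π f - s N ∈ maximalIdeal V ^ m := by
  have hs' (N : ℕ) : s N = ∑ n ∈ range N, termAt hinj π f n :=
    IsFractionRing.injective V (FractionRing V) <| by
      simp only [hs, map_sum, algebraMap_termAt hf]
  obtain ⟨N₀, hN₀⟩ := eventually_atTop.mp
    (tendsto_nhds_iff_sub_mem_pow.mp hsum.hasSum.tendsto_sum_nat m)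
  exact ⟨N₀, fun N hN => by simpa [evalAt, hs', neg_sub] using neg_mem (hN₀ N hN)⟩

theorem evalAt_add [T2Space V] (hf : HasIntegralTerms hinj π f)
    (hg : HasIntegralTerms hinj π g) (hsf : Summable (termAt hinj π f))
    (hsg : Summable (termAt hinj π g)) :
    evalAt hinj π (f + g) = evalAt hinj π f + evalAt hinj π g := by
  simp only [evalAt, termAt_add hf hg, hsf.tsum_add hsg]

theorem evalAt_mul [T2Space V] (hf : HasIntegralTerms hinj π f)
    (hg : HasIntegralTerms hinj π g) (hsf : Summable (termAt hinj π f))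
    (hsg : Summable (termAt hinj π g)) :
    evalAt hinj π (f * g) = evalAt hinj π f * evalAt hinj π g := by
  simp only [evalAt, termAt_mul hf hg,
    hsf.tsum_mul_tsum_eq_tsum_sum_antidiagonal hsg (hsf.mul_of_nonarchimedean hsg)]

theorem evalAt_C (w : WittVector p k) :
    evalAt hinj π (C (algebraMap (WittVector p k) (FractionRing (WittVector p k)) w)) =
      algebraMap (WittVector p k) V w := by
  rw [evalAt, tsum_eq_single 0 fun n hn => by rw [termAt_C, if_neg hn], termAt_C, if_pos rfl]

theorem evalAt_X : evalAt hinj π X = π := by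
  rw [evalAt, tsum_eq_single 1 fun n hn => by rw [termAt_X, if_neg hn], termAt_X, if_pos rfl]

end Summation

section Piano

variable {p : ℕ} [Fact p.Prime] {k : Type*} [Field k] {e : ℕ}
  {V : Type*} [CommRing V] [IsDomain V] [IsLocalRing V] [Algebra (WittVector p k) V]
  {hinj : Function.Injective (algebraMap (WittVector p k) V)} {π : V}
  {f : PowerSeries (FractionRing (WittVector p k))}

theorem mem_pianoTilde_of_coeff_mem
    (h : ∀ n, coeff n f ∈ (algebraMap (WittVector p k) (FractionRing (WittVector p k))).range) :
    f ∈ pianoTilde p k e :=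
  fun n => mul_mem (h n) (natCast_mem _ _)

theorem exists_algebraMap_eq_mem_pow_of_mem_pianoTilde [CharP k p] (hp3 : 3 ≤ p)
    (hπ : maximalIdeal V = Ideal.span {π}) {c : ℕ} {u : Vˣ}
    (hu : algebraMap (WittVector p k) V p = u * π ^ c) (hce : c ≤ e) (hf : f ∈ pianoTilde p k e)
    (n : ℕ) : ∃ v : V, algebraMap V (FractionRing V) v =
      embB p k V hinj (coeff n f) * algebraMap V (FractionRing V) π ^ n ∧
      v ∈ maximalIdeal V ^ (n - n / 2) := by
  obtain ⟨b, hb⟩ := hf n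
  obtain ⟨q, hq⟩ := algebraMap_factorial_mul_pow_dvd hp3 hu hce n
  refine ⟨algebraMap (WittVector p k) V b * (π ^ (n - n / 2) * q), ?_, ?_⟩
  · rw [← map_pow, hq, mul_assoc, map_mul, map_mul (algebraMap V _) (algebraMap _ V _),
      ← embB_algebraMap hinj, ← embB_algebraMap hinj, ← mul_assoc, ← map_mul, map_natCast, hb]
  · rw [hπ, Ideal.span_singleton_pow]
    exact Ideal.mul_mem_left _ _ (Ideal.mul_mem_right _ _ (Ideal.mem_span_singleton_self _))

theorem hasIntegralTerms_and_summable_of_mem_pianoTilde [CharP k p] [CompleteSpace V]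
    (hp3 : 3 ≤ p) (hπ : maximalIdeal V = Ideal.span {π}) {c : ℕ} {u : Vˣ}
    (hu : algebraMap (WittVector p k) V p = u * π ^ c) (hce : c ≤ e) (hf : f ∈ pianoTilde p k e) :
    HasIntegralTerms hinj π f ∧ Summable (termAt hinj π f) := by
  have h := exists_algebraMap_eq_mem_pow_of_mem_pianoTilde (hinj := hinj) hp3 hπ hu hce hf
  refine ⟨fun n => (h n).imp fun _ => And.left, summable_of_mem_pow (d := fun n => n - n / 2)
    (tendsto_atTop_atTop.mpr fun b => ⟨2 * b, fun n hn => by omega⟩) fun n => ?_⟩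
  obtain ⟨v, hv, hmem⟩ := h n
  rwa [termAt_eq hv]

theorem exists_mem_pianoTilde_evalAt_eq [CompleteSpace V] [T2Space V]
    (hπ : maximalIdeal V = Ideal.span {π})
    (hres : ∀ v : V, ∃ w, v - algebraMap (WittVector p k) V w ∈ maximalIdeal V) (v : V) :
    ∃ f ∈ pianoTilde p k e, evalAt hinj π f = v := by
  rw [hπ] at hres
  obtain ⟨a, ha⟩ := exists_digits_sub_sum_mem_pow π (algebraMap (WittVector p k) V) hres v
  set f := PowerSeries.mk fun n => algebraMap (WittVector p k) (FractionRing (WittVector p k)) (a n)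
  have hterm (n : ℕ) : termAt hinj π f n = algebraMap (WittVector p k) V (a n) * π ^ n :=
    termAt_eq (by simp [f, embB_algebraMap])
  have hsum : Summable (termAt hinj π f) := summable_of_mem_pow tendsto_id fun n => by
    rw [hterm, hπ, Ideal.span_singleton_pow]
    exact Ideal.mul_mem_left _ _ (Ideal.mem_span_singleton_self _)
  refine ⟨f, mem_pianoTilde_of_coeff_mem fun n => by simp [f],
    tendsto_nhds_unique hsum.hasSum.tendsto_sum_nat (tendsto_nhds_iff_sub_mem_pow.mpr fun m => ?_)⟩
  filter_upwards [eventually_ge_atTop m] with N hN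
  rw [hπ]
  simpa [hterm, neg_sub] using neg_mem (Ideal.pow_le_pow_right hN (ha N))

end Piano

theorem pianoTilde_key (hp3 : 3 ≤ p) (e : ℕ)
    (V : Type*) [CommRing V] [IsDomain V] [IsDiscreteValuationRing V]
    [Algebra (WittVector p k) V]
    (hinj : Function.Injective (algebraMap (WittVector p k) V))
    (hlocal : ∀ w : WittVector p k, IsUnit (algebraMap (WittVector p k) V w) → IsUnit w)
    (hfin : Module.Finite (WittVector p k) V) (hfree : Module.Free (WittVector p k) V)
    (hrank : Module.finrank (WittVector p k) V ≤ e)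
    (hres : ∀ v : V, ∃ w : WittVector p k,
      v - algebraMap (WittVector p k) V w ∈ IsLocalRing.maximalIdeal V)
    (π : V) (hπ : IsLocalRing.maximalIdeal V = Ideal.span {π}) :
    -- each term `aₙ πⁿ` lies in `V`:
    (∀ f ∈ pianoTilde p k e, ∀ n : ℕ, ∃ v : V,
      algebraMap V (FractionRing V) v
        = embB p k V hinj (PowerSeries.coeff n f) * algebraMap V (FractionRing V) π ^ n) ∧
    -- the summation map `Φ : f ↦ Σₙ aₙπⁿ`:
    ∃ Φ : PowerSeries (FractionRing (WittVector p k)) → V,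
      -- the partial sums converge in the maximal-ideal-adic topology to `Φ f`:
      (∀ f ∈ pianoTilde p k e, ∀ s : ℕ → V,
        (∀ N : ℕ, algebraMap V (FractionRing V) (s N)
          = ∑ n ∈ Finset.range N,
              embB p k V hinj (PowerSeries.coeff n f) * algebraMap V (FractionRing V) π ^ n) →
        ∀ m : ℕ, ∃ N₀ : ℕ, ∀ N ≥ N₀, Φ f - s N ∈ IsLocalRing.maximalIdeal V ^ m) ∧
      -- `Φ` restricted to `R̃e(k)` is a `W(k)`-algebra homomorphism:
      (∀ f ∈ pianoTilde p k e, ∀ g ∈ pianoTilde p k e, Φ (f + g) = Φ f + Φ g) ∧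
      (∀ f ∈ pianoTilde p k e, ∀ g ∈ pianoTilde p k e, Φ (f * g) = Φ f * Φ g) ∧
      Φ 1 = 1 ∧
      (∀ w : WittVector p k,
        Φ (PowerSeries.C (R := FractionRing (WittVector p k))
            (algebraMap (WittVector p k) (FractionRing (WittVector p k)) w))
          = algebraMap (WittVector p k) V w) ∧
      -- `Φ` sends `T` to `π`:
      Φ PowerSeries.X = π ∧
      -- `Φ` is surjective onto `V`:
      (∀ v : V, ∃ f ∈ pianoTilde p k e, Φ f = v) := by
  have : IsLocalHom (algebraMap (WittVector p k) V) := ⟨hlocal⟩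
  have hπirr : Irreducible π := (IsDiscreteValuationRing.irreducible_iff_uniformizer π).mpr hπ
  obtain ⟨c, u, hc, hcrank, hu⟩ := IsDiscreteValuationRing.exists_algebraMap_eq_unit_mul_pow
    hinj (WittVector.irreducible p) hπirr
  have : IsAdicComplete (maximalIdeal V) V :=
    IsLocalRing.isAdicComplete_of_map_eq_pow (I := Ideal.span {(p : WittVector p k)}) hc <| by
      rw [Ideal.map_span, Set.image_singleton, hu, Ideal.span_singleton_mul_left_unit u.isUnit,
        ← Ideal.span_singleton_pow, hπ]
  obtain ⟨_, _⟩ := (IsAdic.isAdicComplete_iff (I := maximalIdeal V) rfl).mp this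
  have hterms (f) (hf : f ∈ pianoTilde p k e) :=
    hasIntegralTerms_and_summable_of_mem_pianoTilde (hinj := hinj) hp3 hπ hu (hcrank.trans hrank) hf
  refine ⟨fun f hf => (hterms f hf).1, evalAt hinj π,
    fun f hf s hs m => evalAt_sub_mem_pow (hterms f hf).1 (hterms f hf).2 hs m,
    fun f hf g hg => evalAt_add (hterms f hf).1 (hterms g hg).1 (hterms f hf).2 (hterms g hg).2,
    fun f hf g hg => evalAt_mul (hterms f hf).1 (hterms g hg).1 (hterms f hf).2 (hterms g hg).2,
    by simpa using evalAt_C (hinj := hinj) (π := π) 1, evalAt_C, evalAt_X,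
    exists_mem_pianoTilde_evalAt_eq hπ hres⟩
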